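/- arXiv:2211.11698 — 8 statements merged into one kernel-verified Lean document; each statement's English description precedes it below -/
import Mathlib

section
/- Let N ≥ 1 and define φ : ℝ × ℝ → ℂ by φ(a,b) = −i·e^{−π(a²+b²)}·(a + i b). Let τ₁, …, τ_N ∈ ℂ with τ_j = u_j + i v_j and v_j > 0, and let m₁, …, m_N, n₁, …, n_N ∈ ℝ with (m_j, n_j) ≠ (0,0) for every j. Then for every s ∈ ℂ with Re(s) > −2, the integrals below converge and ∏_{j=1}^N ∫_0^∞ φ( (m_j − n_j u_j)·t/√v_j , n_j·√v_j·t ) · t^{1+s} dt/t = Γ(1 + s/2)^N · (2 i π^{1+s/2})^{−N} · ( ∏_{j=1}^N v_j^{(1+s)/2} ) / ( ∏_{j=1}^N (m_j − n_j τ_j) · ∏_{j=1}^N |m_j − n_j τ_j|^s ). -/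
/-!
Along the ray `t ↦ t • w` the Schwartz function is `-i w t e^{-π|w|²t²}`, so each factor is the
Gaussian Mellin transform `∫₀^∞ t^{1+s} e^{-bt²} dt = b^{-(1+s/2)} Γ(1+s/2) / 2` (substitute
`y = t²` in Euler's integral for `Γ`). With `b = π|w|²` and `w / |w|² = 1 / w̄` it equals
`Γ(1+s/2) / (2iπ^{1+s/2} w̄ |w|^s)`. For the `j`-th factor `w = conj(m - nτ) / √v`, which turns
`w̄ |w|^s` into `(m - nτ) |m - nτ|^s / v^{(1+s)/2}`.
-/

open MeasureTheory Set Complex Real ComplexConjugate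

theorem integrableOn_cpow_mul_exp_neg_mul_sq {b : ℝ} (hb : 0 < b) {s : ℂ} (hs : -1 < s.re) :
    IntegrableOn (fun t : ℝ => (t : ℂ) ^ s * cexp (-b * (t : ℂ) ^ 2)) (Ioi 0) := by
  refine (integrableOn_rpow_mul_exp_neg_mul_sq hb hs).mono' (by fun_prop) ?_
  filter_upwards [ae_restrict_mem measurableSet_Ioi] with t (ht : 0 < t)
  rw [norm_mul, norm_cpow_eq_rpow_re_of_pos ht, norm_cexp_neg_mul_sq, ofReal_re]

theorem integral_cpow_mul_exp_neg_mul_sq {b : ℝ} (hb : 0 < b) {s : ℂ} (hs : -1 < s.re) :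
    ∫ t in Ioi (0 : ℝ), (t : ℂ) ^ s * cexp (-b * (t : ℂ) ^ 2) =
      (1 / b) ^ ((s + 1) / 2) / 2 * Gamma ((s + 1) / 2) := by
  have hs' : 0 < ((s + 1) / 2).re := by simp; linarith
  have hsubst := integral_comp_rpow_Ioi_of_pos two_pos
    (g := fun y : ℝ => (y : ℂ) ^ ((s + 1) / 2 - 1) * cexp (-(b * y)))
  rw [integral_cpow_mul_exp_neg_mul_Ioi hs' hb] at hsubst
  rw [div_mul_eq_mul_div, ← hsubst, ← integral_div]
  refine setIntegral_congr_fun measurableSet_Ioi fun t (ht : 0 < t) => ?_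
  have ht' : (t : ℂ) ≠ 0 := ofReal_ne_zero.mpr ht.ne'
  rw [real_smul, ← cpow_mul_ofReal_nonneg ht.le, Real.rpow_two,
    show ((2 : ℝ) : ℂ) * ((s + 1) / 2 - 1) = s - 1 by push_cast; ring, cpow_sub _ _ ht', cpow_one]
  norm_num
  field_simp

noncomputable def archimedeanSchwartz (x : ℝ × ℝ) : ℂ :=
  -I * cexp (-π * (x.1 ^ 2 + x.2 ^ 2)) * (x.1 + I * x.2)

theorem archimedeanSchwartz_ray (w : ℂ) (t : ℝ) :
    archimedeanSchwartz (w.re * t, w.im * t) =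
      -I * w * t * cexp (-((π * ‖w‖ ^ 2 : ℝ) : ℂ) * (t : ℂ) ^ 2) := by
  have hnorm : ‖w‖ ^ 2 = w.re ^ 2 + w.im ^ 2 := by rw [Complex.sq_norm, normSq_apply]; ring
  obtain ⟨a, b⟩ := w
  simp only at hnorm ⊢
  rw [archimedeanSchwartz, hnorm, mk_eq_add_mul_I]
  push_cast
  ring_nf

theorem archimedeanSchwartz_ray_mul_cpow_div (w : ℂ) {t : ℝ} (ht : t ≠ 0) (s : ℂ) :
    archimedeanSchwartz (w.re * t, w.im * t) * (t : ℂ) ^ (1 + s) / t =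
      -I * w * ((t : ℂ) ^ (1 + s) * cexp (-((π * ‖w‖ ^ 2 : ℝ) : ℂ) * (t : ℂ) ^ 2)) := by
  have ht' : (t : ℂ) ≠ 0 := ofReal_ne_zero.mpr ht
  rw [archimedeanSchwartz_ray]
  field_simp

theorem one_div_pi_mul_sq_cpow {w : ℂ} (hw : w ≠ 0) (s : ℂ) :
    (1 / ((π * ‖w‖ ^ 2 : ℝ) : ℂ)) ^ (1 + s / 2) =
      ((π : ℂ) ^ (1 + s / 2) * ((‖w‖ : ℂ) ^ 2 * (‖w‖ : ℂ) ^ s))⁻¹ := by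
  have harg : (‖w‖ : ℂ).arg = 0 := arg_ofReal_of_nonneg (norm_nonneg w)
  have hne : (‖w‖ : ℂ) ≠ 0 := ofReal_ne_zero.mpr (norm_ne_zero_iff.mpr hw)
  rw [one_div, inv_cpow_ofReal_nonneg (by positivity), ofReal_mul,
    mul_cpow_ofReal_nonneg pi_pos.le (by positivity), ofReal_pow,
    ← cpow_ofNat_mul' (by simp [harg, pi_pos]) (by simp [harg, pi_pos.le]),
    mul_add, mul_one, mul_div_cancel₀ _ two_ne_zero, cpow_add _ _ hne, cpow_ofNat]

theorem ofReal_sqrt_cpow {v : ℝ} (hv : 0 ≤ v) (s : ℂ) : (√v : ℂ) ^ s = (v : ℂ) ^ (s / 2) := by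
  rw [Real.sqrt_eq_rpow, ← cpow_mul_ofReal_nonneg hv]
  push_cast
  ring_nf

section Ray

variable {w s : ℂ}

theorem integrableOn_archimedeanSchwartz_ray (hw : w ≠ 0) (hs : -2 < s.re) :
    IntegrableOn (fun t : ℝ => archimedeanSchwartz (w.re * t, w.im * t) * (t : ℂ) ^ (1 + s) / t)
      (Ioi 0) := by
  have hb : 0 < π * ‖w‖ ^ 2 := by positivity
  refine IntegrableOn.congr_fun ?_
    (fun t ht => (archimedeanSchwartz_ray_mul_cpow_div w (ne_of_gt ht) s).symm) measurableSet_Ioi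
  exact (integrableOn_cpow_mul_exp_neg_mul_sq hb (by simp; linarith)).const_mul (-I * w)

theorem integral_archimedeanSchwartz_ray (hw : w ≠ 0) (hs : -2 < s.re) :
    ∫ t in Ioi (0 : ℝ), archimedeanSchwartz (w.re * t, w.im * t) * (t : ℂ) ^ (1 + s) / t =
      Gamma (1 + s / 2) * (2 * I * (π : ℂ) ^ (1 + s / 2))⁻¹ / (conj w * (‖w‖ : ℂ) ^ s) := by
  have hb : 0 < π * ‖w‖ ^ 2 := by positivity
  rw [setIntegral_congr_fun measurableSet_Ioi
      fun t ht => archimedeanSchwartz_ray_mul_cpow_div w (ne_of_gt ht) s,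
    integral_const_mul, integral_cpow_mul_exp_neg_mul_sq hb (by simp; linarith),
    show (1 + s + 1) / 2 = 1 + s / 2 by ring, one_div_pi_mul_sq_cpow hw]
  have hconj : conj w ≠ 0 := (map_ne_zero _).mpr hw
  have hnorm : (‖w‖ : ℂ) ≠ 0 := ofReal_ne_zero.mpr (norm_ne_zero_iff.mpr hw)
  have hpi : (π : ℂ) ^ (1 + s / 2) ≠ 0 := by simp [cpow_eq_zero_iff, pi_ne_zero]
  have hs0 : (‖w‖ : ℂ) ^ s ≠ 0 := by simp [cpow_eq_zero_iff, hnorm]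
  generalize Gamma (1 + s / 2) = G
  field_simp
  linear_combination G * mul_conj' w - w * G * conj w * I_sq

theorem archimedeanSchwartz_zetaFactor {m n u v : ℝ} (hv : 0 < v) (hmn : (m, n) ≠ (0, 0))
    (hs : -2 < s.re) :
    IntegrableOn (fun t : ℝ =>
        archimedeanSchwartz ((m - n * u) * t / √v, n * √v * t) * (t : ℂ) ^ (1 + s) / t) (Ioi 0) ∧
      ∫ t in Ioi (0 : ℝ),
          archimedeanSchwartz ((m - n * u) * t / √v, n * √v * t) * (t : ℂ) ^ (1 + s) / t =
        Gamma (1 + s / 2) * (2 * I * (π : ℂ) ^ (1 + s / 2))⁻¹ * (v : ℂ) ^ ((1 + s) / 2) /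
          ((m - n * (u + I * v)) * (‖(m : ℂ) - n * (u + I * v)‖ : ℂ) ^ s) := by
  obtain ⟨w, hre, him⟩ : ∃ w : ℂ, w.re = (m - n * u) / √v ∧ w.im = n * √v := ⟨⟨_, _⟩, rfl, rfl⟩
  have hsqrt : 0 < √v := Real.sqrt_pos.mpr hv
  have hw : w ≠ 0 := by
    intro h
    have hn : n = 0 := by simpa [h, hsqrt.ne'] using him.symm
    have hm : m = 0 := by simpa [h, hn, hsqrt.ne'] using hre.symm
    exact hmn (by rw [hm, hn])
  have hz : (m : ℂ) - n * (u + I * v) = √v * conj w := by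
    apply Complex.ext
    · simp [hre]
      field_simp
    · simp [him]
      linear_combination (-n) * Real.mul_self_sqrt hv.le
  simp_rw [mul_div_right_comm _ _ (√v), ← hre, ← him]
  refine ⟨integrableOn_archimedeanSchwartz_ray hw hs, ?_⟩
  rw [integral_archimedeanSchwartz_ray hw hs, hz, norm_mul, norm_conj, norm_real, ofReal_mul,
    mul_cpow_ofReal_nonneg (norm_nonneg _) (norm_nonneg _), Real.norm_of_nonneg hsqrt.le,
    ← ofReal_sqrt_cpow hv.le, cpow_add _ _ (ofReal_ne_zero.mpr hsqrt.ne'), cpow_one]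
  have hsqrt' : (√v : ℂ) ≠ 0 := ofReal_ne_zero.mpr hsqrt.ne'
  have hnorm : (‖w‖ : ℂ) ^ s ≠ 0 := by simp [cpow_eq_zero_iff, hw]
  have hsqrts : (√v : ℂ) ^ s ≠ 0 := by simp [cpow_eq_zero_iff, hsqrt']
  field_simp

end Ray

theorem archimedean_zeta_integral_general
    (N : ℕ)
    (φ : ℝ × ℝ → ℂ)
    (hφ : ∀ a b : ℝ,
      φ (a, b) = -Complex.I * Complex.exp (-Real.pi * (a ^ 2 + b ^ 2)) * (a + Complex.I * b))
    (u v m n : Fin N → ℝ) (τ : Fin N → ℂ)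
    (hτ : ∀ j, τ j = (u j : ℂ) + Complex.I * (v j : ℂ))
    (hv : ∀ j, 0 < v j)
    (hmn : ∀ j, (m j, n j) ≠ (0, 0))
    (s : ℂ) (hs : -2 < s.re) :
    (∀ j, IntegrableOn
      (fun t : ℝ =>
        φ ((m j - n j * u j) * t / Real.sqrt (v j), n j * Real.sqrt (v j) * t)
          * (t : ℂ) ^ (1 + s) / (t : ℂ)) (Set.Ioi 0)) ∧
    (∏ j, ∫ t in Set.Ioi (0 : ℝ),
        φ ((m j - n j * u j) * t / Real.sqrt (v j), n j * Real.sqrt (v j) * t)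
          * (t : ℂ) ^ (1 + s) / (t : ℂ))
      = Complex.Gamma (1 + s / 2) ^ N
        * ((2 * Complex.I * (Real.pi : ℂ) ^ (1 + s / 2)) ^ N)⁻¹
        * (∏ j, (v j : ℂ) ^ ((1 + s) / 2))
        / ((∏ j, ((m j : ℂ) - (n j : ℂ) * τ j))
            * ∏ j, ((‖(m j : ℂ) - (n j : ℂ) * τ j‖ : ℝ) : ℂ) ^ s) := by
  obtain rfl : φ = archimedeanSchwartz := funext fun ⟨a, b⟩ => hφ a b
  have hfactor j := archimedeanSchwartz_zetaFactor (u := u j) (hv j) (hmn j) hs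
  simp only [hτ]
  refine ⟨fun j => (hfactor j).1, ?_⟩
  rw [Finset.prod_congr rfl fun j _ => (hfactor j).2]
  simp only [Finset.prod_div_distrib, Finset.prod_mul_distrib, Finset.prod_const,
    Finset.card_univ, Fintype.card_fin, mul_pow, inv_pow]

/-- The archimedean zeta integral computation (Lemma 2.1). -/
theorem archimedean_zeta_integral
    (N : ℕ) (hN : 1 ≤ N)
    (φ : ℝ × ℝ → ℂ)
    (hφ : ∀ a b : ℝ,
      φ (a, b) = -Complex.I * Complex.exp (-Real.pi * (a ^ 2 + b ^ 2)) * (a + Complex.I * b))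
    (u v m n : Fin N → ℝ) (τ : Fin N → ℂ)
    (hτ : ∀ j, τ j = (u j : ℂ) + Complex.I * (v j : ℂ))
    (hv : ∀ j, 0 < v j)
    (hmn : ∀ j, (m j, n j) ≠ (0, 0))
    (s : ℂ) (hs : -2 < s.re) :
    (∀ j, IntegrableOn
      (fun t : ℝ =>
        φ ((m j - n j * u j) * t / Real.sqrt (v j), n j * Real.sqrt (v j) * t)
          * (t : ℂ) ^ (1 + s) / (t : ℂ)) (Set.Ioi 0)) ∧
    (∏ j, ∫ t in Set.Ioi (0 : ℝ),
        φ ((m j - n j * u j) * t / Real.sqrt (v j), n j * Real.sqrt (v j) * t)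
          * (t : ℂ) ^ (1 + s) / (t : ℂ))
      = Complex.Gamma (1 + s / 2) ^ N
        * ((2 * Complex.I * (Real.pi : ℂ) ^ (1 + s / 2)) ^ N)⁻¹
        * (∏ j, (v j : ℂ) ^ ((1 + s) / 2))
        / ((∏ j, ((m j : ℂ) - (n j : ℂ) * τ j))
            * ∏ j, ((‖(m j : ℂ) - (n j : ℂ) * τ j‖ : ℝ) : ℂ) ^ s) :=
  archimedean_zeta_integral_general N φ hφ u v m n τ hτ hv hmn s hs
end

section
/- Let F be a totally real number field of degree N and let σ range over the N real embeddings F → ℝ. Let x, x' ∈ F satisfy tr_{F/ℚ}(x·x') < 0. Then ∏_σ ( 2 ∫_0^∞ e^{−π( σ(x)²/t² + σ(x')² t² )} · ( σ(x)/t + σ(x')·t ) dt/t ) = 0. -/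
/-! The measure `dt / t` on `(0, ∞)` is invariant under `t ↦ c / t` for every `c > 0`. When
`a * b < 0`, the choice `c = -a / b` fixes the Gaussian `exp (-π (a² / t² + b² t²))` and negates
`a / t + b t`, so the archimedean factor at `σ` vanishes as soon as `σ x * σ x' < 0`. Since `F` is
totally real, `tr (x x') = ∑_σ σ x * σ x'`, and a negative trace forces such an embedding. -/
open MeasureTheory Set

section MultiplicativeHaar

variable {E : Type*} [NormedAddCommGroup E] [NormedSpace ℝ E]

theorem integral_Ioi_inv_smul_comp_div (g : ℝ → E) {c : ℝ} (hc : 0 < c) :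
    ∫ t in Ioi 0, t⁻¹ • g (c / t) = ∫ t in Ioi 0, t⁻¹ • g t := by
  have hinv : Function.Involutive fun t : ℝ => c / t := fun t => div_div_cancel₀ hc.ne'
  have himage : (fun t : ℝ => c / t) '' Ioi 0 = Ioi 0 := by
    rw [hinv.image_eq_preimage_symm]
    ext t
    exact div_pos_iff_of_pos_left hc
  have hderiv : ∀ t ∈ Ioi (0 : ℝ), HasDerivWithinAt (fun t => c / t) (-c / t ^ 2) (Ioi 0) t :=
    fun t ht => by
      simpa [div_eq_mul_inv, neg_div] using
        ((hasDerivAt_inv (ne_of_gt ht)).const_mul c).hasDerivWithinAt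
  have := integral_image_eq_integral_abs_deriv_smul measurableSet_Ioi hderiv
    hinv.injective.injOn fun s => s⁻¹ • g s
  rw [himage] at this
  rw [this]
  refine setIntegral_congr_fun measurableSet_Ioi fun t (ht : 0 < t) => ?_
  rw [smul_smul, abs_div, abs_neg, abs_of_pos hc, abs_of_pos (by positivity)]
  congr 1
  field_simp

theorem integral_Ioi_inv_smul_eq_zero_of_comp_div_eq_neg {g : ℝ → E} {c : ℝ} (hc : 0 < c)
    (hg : ∀ t, 0 < t → g (c / t) = -g t) : ∫ t in Ioi 0, t⁻¹ • g t = 0 := by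
  have h := integral_Ioi_inv_smul_comp_div g hc
  rw [setIntegral_congr_fun measurableSet_Ioi fun t ht => by rw [hg t ht, smul_neg],
    integral_neg, eq_comm, eq_neg_iff_add_eq_zero, ← two_smul ℝ, smul_eq_zero] at h
  exact h.resolve_left two_ne_zero

end MultiplicativeHaar

theorem integral_Ioi_exp_mul_div_eq_zero_of_mul_neg {a b : ℝ} (hab : a * b < 0) :
    ∫ t in Ioi (0 : ℝ), Real.exp (-Real.pi * (a ^ 2 / t ^ 2 + b ^ 2 * t ^ 2))
      * (a / t + b * t) / t = 0 := by
  have ha : a ≠ 0 := by rintro rfl; simp at hab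
  have hb : b ≠ 0 := by rintro rfl; simp at hab
  have hc : 0 < -a / b := by
    rw [show -a / b = -(a * b) / b ^ 2 by field_simp]
    exact div_pos (neg_pos.mpr hab) (by positivity)
  convert integral_Ioi_inv_smul_eq_zero_of_comp_div_eq_neg hc (g := fun t =>
    Real.exp (-Real.pi * (a ^ 2 / t ^ 2 + b ^ 2 * t ^ 2)) * (a / t + b * t)) ?_ using 2
  · ext t
    rw [smul_eq_mul, div_eq_inv_mul]
  intro t _
  have hexp :
      a ^ 2 / (-a / b / t) ^ 2 + b ^ 2 * (-a / b / t) ^ 2 = a ^ 2 / t ^ 2 + b ^ 2 * t ^ 2 := by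
    field_simp
    ring
  simp only [hexp]
  field_simp
  ring

theorem NumberField.sum_realEmbeddings_eq_trace {F : Type*} [Field F] [NumberField F]
    (hF : Fintype.card (F →+* ℝ) = Module.finrank ℚ F) (y : F) :
    ∑ φ : F →+* ℝ, φ y = Algebra.trace ℚ F y := by
  let toComplex : (F →+* ℝ) → (F →+* ℂ) := Complex.ofRealHom.comp
  have htoComplex : Function.Bijective toComplex :=
    (Fintype.bijective_iff_injective_and_card _).mpr
      ⟨fun φ ψ h => RingHom.ext fun z => Complex.ofReal_injective (RingHom.congr_fun h z),
        by rw [hF, NumberField.Embeddings.card]⟩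
  apply Complex.ofReal_injective
  calc ((∑ φ : F →+* ℝ, φ y : ℝ) : ℂ) = ∑ φ : F →+* ℝ, toComplex φ y := by push_cast; rfl
    _ = ∑ φ : F →+* ℂ, φ y := htoComplex.sum_comp fun φ => φ y
    _ = ∑ τ : F →ₐ[ℚ] ℂ, τ y := (RingHom.equivRatAlgHom F ℂ).sum_comp fun τ => τ y
    _ = algebraMap ℚ ℂ (Algebra.trace ℚ F y) := (trace_eq_sum_embeddings ℂ).symm
    _ = ((Algebra.trace ℚ F y : ℝ) : ℂ) := by simp

/-- Part (4) of Lemma 4.3: the archimedean integral vanishes for negative vectors. -/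
theorem archimedean_integral_vanishes_on_negative_vectors
    (F : Type*) [Field F] [NumberField F] (N : ℕ)
    (hdeg : Module.finrank ℚ F = N)
    (σ : Fin N → (F →+* ℝ)) (hσ : Function.Bijective σ)
    (x x' : F) (htr : Algebra.trace ℚ F (x * x') < 0) :
    (∏ j, 2 * ∫ t in Set.Ioi (0 : ℝ),
        Real.exp (-Real.pi * ((σ j x) ^ 2 / t ^ 2 + (σ j x') ^ 2 * t ^ 2))
          * ((σ j x) / t + (σ j x') * t) / t) = 0 := by
  have hcard : Fintype.card (F →+* ℝ) = Module.finrank ℚ F := by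
    rw [← Fintype.card_of_bijective hσ, Fintype.card_fin, hdeg]
  have hsum : ∑ j, σ j x * σ j x' < 0 := by
    simp_rw [← map_mul]
    rw [hσ.sum_comp fun φ => φ (x * x'), NumberField.sum_realEmbeddings_eq_trace hcard]
    exact_mod_cast htr
  obtain ⟨j, hj⟩ : ∃ j, σ j x * σ j x' < 0 := by
    by_contra! h
    exact (Finset.sum_nonneg fun j _ => h j).not_gt hsum
  exact Finset.prod_eq_zero (Finset.mem_univ j)
    (by rw [integral_Ioi_exp_mul_div_eq_zero_of_mul_neg hj, mul_zero])
end

section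
/- For all real numbers a, b with a·b > 0, the integral below converges and 2 ∫_0^∞ e^{−π( a²/t² + b² t² )} · ( a/t + b·t ) dt/t = 2 · sgn(a) · e^{−2π a b}. -/
/-!
Completing the square, `a² / t² + b² t² = (b t - a / t)² + 2 a b`, and `(a / t + b t) dt / t = du`
for `u = b t - a / t`. When `a, b > 0` this substitution maps `(0, ∞)` increasingly onto `ℝ`
(Cauchy–Schlömilch), so the integral is `e^{-2π a b} ∫_ℝ e^{-π u²} du = e^{-2π a b}`. Replacing
`(a, b)` by `(-a, -b)` negates the integrand, which accounts for the factor `sgn a`.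
-/

open MeasureTheory Real Set

section CauchySchlomilch

theorem hasDerivAt_mul_sub_div (A B : ℝ) {t : ℝ} (ht : t ≠ 0) :
    HasDerivAt (fun t => B * t - A / t) (B + A / t ^ 2) t := by
  have h := ((hasDerivAt_id t).const_mul B).sub ((hasDerivAt_inv ht).const_mul A)
  simp only [id, mul_one, mul_neg, sub_neg_eq_add, ← div_eq_mul_inv] at h
  exact h

variable {A B : ℝ}

theorem monotoneOn_mul_sub_div (hA : 0 ≤ A) (hB : 0 ≤ B) :
    MonotoneOn (fun t => B * t - A / t) (Ioi 0) := fun _ hx _ _ hxy =>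
  sub_le_sub (mul_le_mul_of_nonneg_left hxy hB) (div_le_div_of_nonneg_left hA hx hxy)

theorem image_mul_sub_div_Ioi (hA : 0 < A) (hB : 0 < B) :
    (fun t => B * t - A / t) '' Ioi 0 = univ := by
  refine eq_univ_of_forall fun y => ?_
  -- the positive root of `B t ^ 2 - y t - A = 0`
  set s := √(y ^ 2 + 4 * A * B)
  have hs : s ^ 2 = y ^ 2 + 4 * A * B := sq_sqrt (by positivity)
  have hys : |y| < s := by
    rw [← sqrt_sq_eq_abs]
    exact sqrt_lt_sqrt (sq_nonneg y) (by linarith [mul_pos hA hB])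
  have hpos : 0 < y + s := by linarith [neg_abs_le y]
  refine ⟨(y + s) / (2 * B), mem_Ioi.2 (by positivity), ?_⟩
  field_simp
  linear_combination hs

variable {E : Type*} [NormedAddCommGroup E] [NormedSpace ℝ E]

theorem integrableOn_Ioi_smul_comp_mul_sub_div_iff (hA : 0 < A) (hB : 0 < B) (g : ℝ → E) :
    IntegrableOn (fun t => (B + A / t ^ 2) • g (B * t - A / t)) (Ioi 0) ↔ Integrable g := by
  rw [← integrableOn_univ, ← image_mul_sub_div_Ioi hA hB,
    integrableOn_image_iff_integrableOn_deriv_smul_of_monotoneOn measurableSet_Ioi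
      (fun t ht => (hasDerivAt_mul_sub_div A B (ne_of_gt ht)).hasDerivWithinAt)
      (monotoneOn_mul_sub_div hA.le hB.le)]

theorem integral_Ioi_smul_comp_mul_sub_div (hA : 0 < A) (hB : 0 < B) (g : ℝ → E) :
    ∫ t in Ioi 0, (B + A / t ^ 2) • g (B * t - A / t) = ∫ u, g u := by
  rw [← integral_image_eq_integral_deriv_smul_of_monotoneOn measurableSet_Ioi
      (fun t ht => (hasDerivAt_mul_sub_div A B (ne_of_gt ht)).hasDerivWithinAt)
      (monotoneOn_mul_sub_div hA.le hB.le), image_mul_sub_div_Ioi hA hB, setIntegral_univ]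

end CauchySchlomilch

theorem integral_exp_neg_pi_mul_sq : ∫ u : ℝ, exp (-π * u ^ 2) = 1 := by
  rw [integral_gaussian, div_self pi_ne_zero, sqrt_one]

/-- The integrand of `J_σ(𝐱, 0)` for the component `(a, b)`. -/
noncomputable def archimedeanIntegrand (a b t : ℝ) : ℝ :=
  exp (-π * (a ^ 2 / t ^ 2 + b ^ 2 * t ^ 2)) * (a / t + b * t) / t

theorem archimedeanIntegrand_neg (a b : ℝ) :
    archimedeanIntegrand (-a) (-b) = -archimedeanIntegrand a b := by
  ext t
  simp only [archimedeanIntegrand, Pi.neg_apply, neg_sq]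
  ring

theorem archimedeanIntegrand_eq (a b : ℝ) {t : ℝ} (ht : t ≠ 0) :
    archimedeanIntegrand a b t =
      exp (-2 * π * a * b) * ((b + a / t ^ 2) • exp (-π * (b * t - a / t) ^ 2)) := by
  have hsq : -π * (a ^ 2 / t ^ 2 + b ^ 2 * t ^ 2) =
      -2 * π * a * b + -π * (b * t - a / t) ^ 2 := by
    field_simp
    ring
  rw [archimedeanIntegrand, hsq, exp_add, smul_eq_mul]
  field_simp
  ring

section

variable {a b : ℝ}

theorem integrableOn_archimedeanIntegrand_of_pos (ha : 0 < a) (hb : 0 < b) :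
    IntegrableOn (archimedeanIntegrand a b) (Ioi 0) :=
  IntegrableOn.congr_fun (((integrableOn_Ioi_smul_comp_mul_sub_div_iff ha hb _).2
    (integrable_exp_neg_mul_sq pi_pos)).const_mul (exp (-2 * π * a * b)))
    (fun _ ht => (archimedeanIntegrand_eq a b (ne_of_gt ht)).symm) measurableSet_Ioi

theorem integral_archimedeanIntegrand_of_pos (ha : 0 < a) (hb : 0 < b) :
    ∫ t in Ioi 0, archimedeanIntegrand a b t = exp (-2 * π * a * b) := by
  rw [setIntegral_congr_fun measurableSet_Ioi
      (fun _ ht => archimedeanIntegrand_eq a b (ne_of_gt ht)),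
    integral_const_mul, integral_Ioi_smul_comp_mul_sub_div ha hb (fun u => exp (-π * u ^ 2)),
    integral_exp_neg_pi_mul_sq, mul_one]

theorem integrableOn_archimedeanIntegrand (hab : 0 < a * b) :
    IntegrableOn (archimedeanIntegrand a b) (Ioi 0) := by
  rcases pos_and_pos_or_neg_and_neg_of_mul_pos hab with ⟨ha, hb⟩ | ⟨ha, hb⟩
  · exact integrableOn_archimedeanIntegrand_of_pos ha hb
  · simpa only [archimedeanIntegrand_neg, neg_neg] using
      (integrableOn_archimedeanIntegrand_of_pos (neg_pos.2 ha) (neg_pos.2 hb)).neg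

theorem integral_archimedeanIntegrand (hab : 0 < a * b) :
    ∫ t in Ioi 0, archimedeanIntegrand a b t = sign a * exp (-2 * π * a * b) := by
  rcases pos_and_pos_or_neg_and_neg_of_mul_pos hab with ⟨ha, hb⟩ | ⟨ha, hb⟩
  · rw [integral_archimedeanIntegrand_of_pos ha hb, sign_of_pos ha, one_mul]
  · have h := integral_archimedeanIntegrand_of_pos (neg_pos.2 ha) (neg_pos.2 hb)
    simp only [archimedeanIntegrand_neg, Pi.neg_apply, integral_neg] at h
    rw [← neg_neg (∫ t in Ioi 0, _), h, sign_of_neg ha]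
    ring_nf

end

/-- The closed-form evaluation of the local archimedean integral `J_σ(𝐱, 0)` for a
component `(a, b)` with `a·b > 0`, the key computation in Proposition 4.12. -/
theorem local_archimedean_integral_eval (a b : ℝ) (hab : 0 < a * b) :
    IntegrableOn
      (fun t : ℝ => Real.exp (-Real.pi * (a ^ 2 / t ^ 2 + b ^ 2 * t ^ 2)) * (a / t + b * t) / t)
      (Set.Ioi 0) ∧
    2 * ∫ t in Set.Ioi (0 : ℝ),
        Real.exp (-Real.pi * (a ^ 2 / t ^ 2 + b ^ 2 * t ^ 2)) * (a / t + b * t) / t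
      = 2 * Real.sign a * Real.exp (-2 * Real.pi * a * b) :=
  ⟨integrableOn_archimedeanIntegrand hab, by
    rw [mul_assoc, ← integral_archimedeanIntegrand hab]
    rfl⟩
end

section
/- Let F be a totally real number field of degree N with ring of integers 𝒪, let σ range over the N real embeddings F → ℝ, and write Nm = N_{F/ℚ}. Let m ∈ F be nonzero, let n be a positive rational number, and suppose y, y' ∈ m𝒪 are both nonzero, tr_{F/ℚ}(y y') = n, and σ(y)·σ(y') > 0 for every σ. Then |Nm(m)| ≤ |Nm(y)| ≤ (n/N)^N / |Nm(m)|, and likewise |Nm(m)| ≤ |Nm(y')| ≤ (n/N)^N / |Nm(m)|. -/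
/-!
The real embeddings of `y y'` are all positive, so by AM–GM their product `Nm(y y')` is at most
`(tr(y y') / N) ^ N = (n / N) ^ N`. On the other hand every nonzero element of `m𝒪` has
`|Nm| ≥ |Nm m|`, since a nonzero algebraic integer has a nonzero integral norm. Dividing the
product bound by the lower bound for one factor bounds the other.
-/

open NumberField Finset Function

theorem Real.prod_le_sum_div_card_pow {ι : Type*} (s : Finset ι) {f : ι → ℝ}
    (hf : ∀ i ∈ s, 0 ≤ f i) : ∏ i ∈ s, f i ≤ ((∑ i ∈ s, f i) / #s) ^ #s := by
  rcases s.eq_empty_or_nonempty with rfl | hs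
  · simp
  have hcard : (0 : ℝ) < #s := by exact_mod_cast hs.card_pos
  have hprod : 0 ≤ ∏ i ∈ s, f i := prod_nonneg hf
  have amgm := Real.geom_mean_le_arith_mean s (fun _ => 1) f (fun _ _ => zero_le_one)
    (by simpa using hcard) hf
  simp only [Real.rpow_one, sum_const, nsmul_eq_mul, mul_one, one_mul] at amgm
  calc ∏ i ∈ s, f i = ((∏ i ∈ s, f i) ^ (#s : ℝ)⁻¹) ^ #s := by
        rw [← Real.rpow_natCast, ← Real.rpow_mul hprod, inv_mul_cancel₀ hcard.ne', Real.rpow_one]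
    _ ≤ ((∑ i ∈ s, f i) / #s) ^ #s := pow_le_pow_left₀ (by positivity) amgm _

theorem le_div_of_mul_le_of_le {α : Type*} [Field α] [LinearOrder α] [IsStrictOrderedRing α]
    {a b c d : α} (ha : 0 ≤ a) (hc : 0 < c) (hcb : c ≤ b) (h : a * b ≤ d) : a ≤ d / c := by
  rw [le_div_iff₀ hc]
  exact (mul_le_mul_of_nonneg_left hcb ha).trans h

namespace NumberField

variable {F : Type*} [Field F] [NumberField F]

theorem one_le_abs_norm {a : 𝓞 F} (ha : a ≠ 0) : 1 ≤ |Algebra.norm ℚ (a : F)| := by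
  rw [← Algebra.coe_norm_int]
  exact_mod_cast Int.one_le_abs (Algebra.norm_ne_zero_iff.mpr ha)

theorem abs_norm_le_abs_norm_mul (m : F) {a : 𝓞 F} (ha : a ≠ 0) :
    |Algebra.norm ℚ m| ≤ |Algebra.norm ℚ (m * a)| := by
  rw [map_mul, abs_mul]
  exact le_mul_of_one_le_right (abs_nonneg _) (one_le_abs_norm ha)

section RealEmbeddings

variable {ι : Type*} [Fintype ι] {σ : ι → F →+* ℝ}
  (hσ : Injective σ) (hcard : Fintype.card ι = Module.finrank ℚ F)
include hσ hcard

theorem bijective_toRatAlgHom_ofReal_comp :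
    Bijective fun j => (Complex.ofRealHom.comp (σ j)).toRatAlgHom := by
  rw [Fintype.bijective_iff_injective_and_card, AlgHom.card, hcard]
  refine ⟨fun i j hij => hσ (RingHom.ext fun x => ?_), rfl⟩
  exact Complex.ofReal_injective (AlgHom.congr_fun hij x)

theorem ratCast_norm_eq_prod (x : F) : (Algebra.norm ℚ x : ℝ) = ∏ j, σ j x := by
  have h := Algebra.norm_eq_prod_embeddings ℚ ℂ x
  rw [← (bijective_toRatAlgHom_ofReal_comp hσ hcard).prod_comp] at h
  simp only [RingHom.toRatAlgHom_apply, RingHom.comp_apply, Complex.ofRealHom_eq_coe,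
    eq_ratCast] at h
  exact_mod_cast h

theorem ratCast_trace_eq_sum (x : F) : (Algebra.trace ℚ F x : ℝ) = ∑ j, σ j x := by
  have h := trace_eq_sum_embeddings ℂ (K := ℚ) (x := x)
  rw [← (bijective_toRatAlgHom_ofReal_comp hσ hcard).sum_comp] at h
  simp only [RingHom.toRatAlgHom_apply, RingHom.comp_apply, Complex.ofRealHom_eq_coe,
    eq_ratCast] at h
  exact_mod_cast h

theorem norm_pos_of_forall_pos {x : F} (hx : ∀ j, 0 < σ j x) : 0 < Algebra.norm ℚ x := by
  rw [← Rat.cast_pos (K := ℝ), ratCast_norm_eq_prod hσ hcard]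
  exact prod_pos fun j _ => hx j

theorem norm_le_trace_div_pow {x : F} (hx : ∀ j, 0 < σ j x) :
    Algebra.norm ℚ x ≤ (Algebra.trace ℚ F x / Fintype.card ι) ^ Fintype.card ι := by
  rw [← Rat.cast_le (K := ℝ)]
  push_cast
  rw [ratCast_norm_eq_prod hσ hcard, ratCast_trace_eq_sum hσ hcard]
  exact Real.prod_le_sum_div_card_pow univ fun j _ => (hx j).le

end RealEmbeddings

end NumberField

theorem norm_bounds_in_lattice_general
    (F : Type*) [Field F] [NumberField F] (N : ℕ)
    (hdeg : Module.finrank ℚ F = N)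
    (σ : Fin N → (F →+* ℝ)) (hσ : Function.Bijective σ)
    (m : F) (hm : m ≠ 0) (n : ℚ)
    (y y' : F)
    (hy : ∃ a : 𝓞 F, y = m * (a : F)) (hy' : ∃ a : 𝓞 F, y' = m * (a : F))
    (hyne : y ≠ 0) (hy'ne : y' ≠ 0)
    (htr : Algebra.trace ℚ F (y * y') = n)
    (hpos : ∀ j, 0 < σ j y * σ j y') :
    (|Algebra.norm ℚ m| ≤ |Algebra.norm ℚ y| ∧
      |Algebra.norm ℚ y| ≤ (n / N) ^ N / |Algebra.norm ℚ m|) ∧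
    (|Algebra.norm ℚ m| ≤ |Algebra.norm ℚ y'| ∧
      |Algebra.norm ℚ y'| ≤ (n / N) ^ N / |Algebra.norm ℚ m|) := by
  have hcard : Fintype.card (Fin N) = Module.finrank ℚ F := by rw [Fintype.card_fin, hdeg]
  have lower : ∀ w : F, (∃ a : 𝓞 F, w = m * (a : F)) → w ≠ 0 →
      |Algebra.norm ℚ m| ≤ |Algebra.norm ℚ w| := by
    rintro w ⟨a, rfl⟩ hw
    exact abs_norm_le_abs_norm_mul m (by rintro rfl; simp at hw)
  have hmy := lower y hy hyne
  have hmy' := lower y' hy' hy'ne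
  have hm_pos : 0 < |Algebra.norm ℚ m| := abs_pos.mpr (Algebra.norm_ne_zero_iff.mpr hm)
  have hprod : |Algebra.norm ℚ y| * |Algebra.norm ℚ y'| ≤ (n / N) ^ N := by
    have hyy' : ∀ j, 0 < σ j (y * y') := by simpa only [map_mul] using hpos
    rw [← abs_mul, ← map_mul, abs_of_pos (norm_pos_of_forall_pos hσ.injective hcard hyy')]
    simpa only [htr, Fintype.card_fin] using norm_le_trace_div_pow hσ.injective hcard hyy'
  exact ⟨⟨hmy, le_div_of_mul_le_of_le (abs_nonneg _) hm_pos hmy' hprod⟩,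
    ⟨hmy', le_div_of_mul_le_of_le (abs_nonneg _) hm_pos hmy ((mul_comm _ _).trans_le hprod)⟩⟩

/-- The norm bound from the proof of Proposition 4.11 (intersectionD). -/
theorem norm_bounds_in_lattice
    (F : Type*) [Field F] [NumberField F] (N : ℕ)
    (hdeg : Module.finrank ℚ F = N)
    (σ : Fin N → (F →+* ℝ)) (hσ : Function.Bijective σ)
    (m : F) (hm : m ≠ 0) (n : ℚ) (hn : 0 < n)
    (y y' : F)
    (hy : ∃ a : 𝓞 F, y = m * (a : F)) (hy' : ∃ a : 𝓞 F, y' = m * (a : F))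
    (hyne : y ≠ 0) (hy'ne : y' ≠ 0)
    (htr : Algebra.trace ℚ F (y * y') = n)
    (hpos : ∀ j, 0 < σ j y * σ j y') :
    (|Algebra.norm ℚ m| ≤ |Algebra.norm ℚ y| ∧
      |Algebra.norm ℚ y| ≤ (n / N) ^ N / |Algebra.norm ℚ m|) ∧
    (|Algebra.norm ℚ m| ≤ |Algebra.norm ℚ y'| ∧
      |Algebra.norm ℚ y'| ≤ (n / N) ^ N / |Algebra.norm ℚ m|) :=
  norm_bounds_in_lattice_general F N hdeg σ hσ m hm n y y' hy hy' hyne hy'ne htr hpos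
end

section
/- Let F be a totally real number field of degree N with ring of integers 𝒪, let σ range over the N real embeddings F → ℝ, let m ∈ F be nonzero and let n be a positive rational number. Let 𝒪^{×,+} denote the group of totally positive units of 𝒪 (units λ with σ(λ) > 0 for all σ). Consider S = { (y, y') ∈ m𝒪 × m𝒪 : tr_{F/ℚ}(y y') = n and σ(y)·σ(y') > 0 for every σ }. Then S has finitely many 𝒪^{×,+}-orbits under the action λ·(y, y') = (λ y, λ⁻¹ y'); that is, there exists a finite subset S₀ ⊆ S such that every element of S equals (λ y, λ⁻¹ y') for some λ ∈ 𝒪^{×,+} and some (y, y') ∈ S₀. -/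
/-!
Write `p = (m a, m b)` with `a, b ∈ 𝒪`. The numbers `σ(m² a b)` are positive and sum to `n`, so
every conjugate of the algebraic integer `a b` is bounded and `a b` takes finitely many values,
none of them zero. The ideal `(a)` contains `a b`, and a nonzero element lies in only finitely
many ideals; the signs of the `σ(a)` take finitely many values as well. Two pairs sharing `a b`,
`(a)` and these signs differ by a unit `u` with `a = u a'`, `b = u⁻¹ b'`, and `u` is totally
positive because `σ(a)` and `σ(a')` have the same signs.
-/

open NumberField

theorem Set.exists_finset_subset_forall_exists_of_finite_image {α β : Type*} {S : Set α}
    (f : α → β) (hf : (f '' S).Finite) {R : α → α → Prop}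
    (hR : ∀ p ∈ S, ∀ q ∈ S, f p = f q → R p q) :
    ∃ S₀ : Finset α, ↑S₀ ⊆ S ∧ ∀ p ∈ S, ∃ q ∈ S₀, R p q := by
  obtain ⟨T, hTS, hT⟩ := S.exists_subset_bijOn f
  have hTfin : T.Finite := .of_finite_image (hT.image_eq ▸ hf) hT.injOn
  refine ⟨hTfin.toFinset, by simpa using hTS, fun p hp => ?_⟩
  obtain ⟨q, hq, hfq⟩ := hT.surjOn (mem_image_of_mem f hp)
  exact ⟨q, hTfin.mem_toFinset.2 hq, hR p hp q (hTS hq) hfq.symm⟩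

theorem exists_unit_of_span_eq_of_mul_eq {R : Type*} [CommRing R] [IsDomain R] {a b a' b' : R}
    (hspan : Ideal.span {a} = Ideal.span {a'}) (hmul : a * b = a' * b') (hne : a * b ≠ 0) :
    ∃ u : Rˣ, a = u * a' ∧ b = ↑u⁻¹ * b' := by
  obtain ⟨u, hu⟩ := Ideal.span_singleton_eq_span_singleton.1 hspan.symm
  refine ⟨u, by rw [← hu, mul_comm], ?_⟩
  rw [Units.eq_inv_mul_iff_mul_eq]
  have ha' : a' ≠ 0 := by rintro rfl; simp_all
  exact mul_left_cancel₀ ha' (by rw [← mul_assoc, hu, hmul])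

theorem pos_of_pos_mul_iff {α : Type*} [Ring α] [LinearOrder α] [IsStrictOrderedRing α]
    {x y : α} (hx : x ≠ 0) (hy : y ≠ 0) (h : 0 < x * y ↔ 0 < y) : 0 < x := by
  by_contra! hle
  have hneg := lt_of_le_of_ne hle hx
  rcases hy.lt_or_gt with hy | hy
  · exact hy.not_gt (h.1 (mul_pos_of_neg_of_neg hneg hy))
  · exact (mul_neg_of_neg_of_pos hneg hy).not_gt (h.2 hy)

section

variable {F : Type*} [Field F]

theorem exists_pos_unit_of_span_eq_of_mul_eq {ι : Type*} (σ : ι → F →+* ℝ) {a b a' b' : 𝓞 F}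
    (hspan : Ideal.span {a} = Ideal.span {a'}) (hmul : a * b = a' * b') (hne : a * b ≠ 0)
    (hsign : ∀ j, 0 < σ j a ↔ 0 < σ j a') :
    ∃ u : (𝓞 F)ˣ, (∀ j, 0 < σ j (u : 𝓞 F)) ∧ a = u * a' ∧ b = ↑u⁻¹ * b' := by
  obtain ⟨u, hua, hub⟩ := exists_unit_of_span_eq_of_mul_eq hspan hmul hne
  have ha' : (a' : F) ≠ 0 := by rintro h; simp_all
  refine ⟨u, fun j => pos_of_pos_mul_iff (by simp) ((map_ne_zero (σ j)).2 ha') ?_, hua, hub⟩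
  simpa [hua] using hsign j

theorem exists_finset_forall_exists_pos_unit [NumberField F] {ι : Type*} [Finite ι]
    (σ : ι → F →+* ℝ) {T : Set (𝓞 F × 𝓞 F)} (hT : ((fun x => x.1 * x.2) '' T).Finite)
    (hne : ∀ x ∈ T, x.1 * x.2 ≠ 0) :
    ∃ T₀ : Finset (𝓞 F × 𝓞 F), ↑T₀ ⊆ T ∧ ∀ x ∈ T, ∃ u : (𝓞 F)ˣ, (∀ j, 0 < σ j (u : 𝓞 F)) ∧
      ∃ y ∈ T₀, x = (u * y.1, ↑u⁻¹ * y.2) := by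
  set invariant : 𝓞 F × 𝓞 F → 𝓞 F × Ideal (𝓞 F) × Set ι :=
    fun x => (x.1 * x.2, Ideal.span {x.1}, {j | 0 < σ j x.1})
  have hfinite : (invariant '' T).Finite := by
    refine (hT.prod ((hT.biUnion fun c ⟨x, hx, hc⟩ => Ring.HasFiniteQuotients.finite_setOfPred_mem
      c (hc ▸ hne x hx)).prod Set.finite_univ)).subset ?_
    rintro _ ⟨x, hx, rfl⟩
    exact ⟨⟨x, hx, rfl⟩, Set.mem_biUnion ⟨x, hx, rfl⟩
      (Ideal.mem_span_singleton.2 (dvd_mul_right _ _)), trivial⟩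
  have horbit : ∀ x ∈ T, ∀ y ∈ T, invariant x = invariant y →
      ∃ u : (𝓞 F)ˣ, (∀ j, 0 < σ j (u : 𝓞 F)) ∧ x = (u * y.1, ↑u⁻¹ * y.2) := by
    intro x hx y _ hxy
    simp only [invariant, Prod.mk.injEq, Set.ext_iff, Set.mem_ofPred_eq] at hxy
    obtain ⟨hmul, hspan, hsign⟩ := hxy
    obtain ⟨u, hu, h₁, h₂⟩ := exists_pos_unit_of_span_eq_of_mul_eq σ hspan hmul (hne x hx) hsign
    exact ⟨u, hu, Prod.ext h₁ h₂⟩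
  obtain ⟨T₀, hT₀, hrepr⟩ := T.exists_finset_subset_forall_exists_of_finite_image invariant
    hfinite horbit
  refine ⟨T₀, hT₀, fun x hx => ?_⟩
  obtain ⟨y, hy, u, hu, hxy⟩ := hrepr x hx
  exact ⟨u, hu, y, hy, hxy⟩

variable [NumberField F] {N : ℕ} {σ : Fin N → (F →+* ℝ)}

theorem bijective_ofRealHom_comp (hdeg : Module.finrank ℚ F = N) (hσ : Function.Bijective σ) :
    Function.Bijective fun j => Complex.ofRealHom.comp (σ j) :=
  (Fintype.bijective_iff_injective_and_card _).2
    ⟨fun i j h => hσ.1 (RingHom.ext fun x => Complex.ofReal_injective (RingHom.congr_fun h x)),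
      by simp [Embeddings.card, hdeg]⟩

theorem trace_eq_sum_apply (hdeg : Module.finrank ℚ F = N) (hσ : Function.Bijective σ) (x : F) :
    (Algebra.trace ℚ F x : ℝ) = ∑ j, σ j x := by
  apply Complex.ofReal_injective
  calc ((Algebra.trace ℚ F x : ℝ) : ℂ) = algebraMap ℚ ℂ (Algebra.trace ℚ F x) := by simp
    _ = ∑ φ : F →ₐ[ℚ] ℂ, φ x := trace_eq_sum_embeddings ℂ
    _ = ∑ φ : F →+* ℂ, φ x :=
      (Fintype.sum_equiv (RingHom.equivRatAlgHom F ℂ) _ _ fun _ => rfl).symm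
    _ = ∑ j, Complex.ofRealHom.comp (σ j) x :=
      (Fintype.sum_bijective _ (bijective_ofRealHom_comp hdeg hσ) _ _ fun _ => rfl).symm
    _ = _ := by simp

theorem apply_le_trace (hdeg : Module.finrank ℚ F = N) (hσ : Function.Bijective σ) {z : F}
    (hz : ∀ j, 0 ≤ σ j z) (j : Fin N) : σ j z ≤ Algebra.trace ℚ F z := by
  rw [trace_eq_sum_apply hdeg hσ]
  exact Finset.single_le_sum (fun k _ => hz k) (Finset.mem_univ j)

theorem finite_setOf_isIntegral_abs_apply_le (hdeg : Module.finrank ℚ F = N)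
    (hσ : Function.Bijective σ) (r : ℝ) :
    {x : F | IsIntegral ℤ x ∧ ∀ j, |σ j x| ≤ r}.Finite := by
  refine (Embeddings.finite_of_norm_le F ℂ r).subset fun x ⟨hx, hr⟩ => ⟨hx, fun φ => ?_⟩
  obtain ⟨j, rfl⟩ := (bijective_ofRealHom_comp hdeg hσ).2 φ
  simpa using hr j

theorem finite_setOf_forall_pos_trace_eq (hdeg : Module.finrank ℚ F = N)
    (hσ : Function.Bijective σ) (c : F) (t : ℚ) :
    {x : 𝓞 F | (∀ j, 0 < σ j (c * x)) ∧ Algebra.trace ℚ F (c * x) = t}.Finite := by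
  refine ((finite_setOf_isIntegral_abs_apply_le hdeg hσ (t * ∑ k, |σ k c|⁻¹)).preimage
    RingOfIntegers.coe_injective.injOn).subset fun x ⟨hpos, htr⟩ => ⟨x.isIntegral_coe, fun j => ?_⟩
  have hle : σ j (c * x) ≤ t := htr ▸ apply_le_trace hdeg hσ (fun k => (hpos k).le) j
  have hc : σ j c ≠ 0 := fun h => by simpa [h] using hpos j
  calc |σ j x| = σ j (c * x) * |σ j c|⁻¹ := by
        rw [← abs_of_pos (hpos j), map_mul, abs_mul, mul_comm,
          inv_mul_cancel_left₀ (abs_ne_zero.2 hc)]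
    _ ≤ t * |σ j c|⁻¹ := by gcongr
    _ ≤ t * ∑ k, |σ k c|⁻¹ :=
            mul_le_mul_of_nonneg_left (Finset.single_le_sum (f := fun k => |σ k c|⁻¹)
          (fun k _ => by positivity) (Finset.mem_univ j)) ((hpos j).le.trans hle)

end

theorem finitely_many_unit_orbits_general
    (F : Type*) [Field F] [NumberField F] (N : ℕ)
    (hdeg : Module.finrank ℚ F = N)
    (σ : Fin N → (F →+* ℝ)) (hσ : Function.Bijective σ)
    (m : F) (n : ℚ)
    (S : Set (F × F))
    (hS : S = {p : F × F | (∃ a : 𝓞 F, p.1 = m * (a : F)) ∧ (∃ a : 𝓞 F, p.2 = m * (a : F)) ∧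
      Algebra.trace ℚ F (p.1 * p.2) = n ∧ ∀ j, 0 < σ j p.1 * σ j p.2}) :
    ∃ S₀ : Finset (F × F), ↑S₀ ⊆ S ∧
      ∀ p ∈ S, ∃ u : (𝓞 F)ˣ, (∀ j, 0 < σ j ((u : 𝓞 F) : F)) ∧
        ∃ q ∈ S₀, p = (((u : 𝓞 F) : F) * q.1, (((u⁻¹ : (𝓞 F)ˣ) : 𝓞 F) : F) * q.2) := by
  classical
  set T : Set (𝓞 F × 𝓞 F) := {x | (m * x.1, m * x.2) ∈ S}
  have hprod : ∀ x ∈ T, x.1 * x.2 ∈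
      {c : 𝓞 F | (∀ j, 0 < σ j (m ^ 2 * c)) ∧ Algebra.trace ℚ F (m ^ 2 * c) = n} := by
    intro x (hx : (m * x.1, m * x.2) ∈ S)
    obtain ⟨-, -, htr, hpos⟩ := hS ▸ hx
    have hmul : m * x.1 * (m * x.2) = m ^ 2 * (x.1 * x.2 : 𝓞 F) := by push_cast; ring
    exact ⟨fun j => by rw [← hmul, map_mul]; exact hpos j, hmul ▸ htr⟩
  have hprod_ne : ∀ x ∈ T, x.1 * x.2 ≠ 0 := fun x hx h => by
    simpa [h] using (hprod x hx).1 ⟨0, hdeg ▸ Module.finrank_pos⟩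
  obtain ⟨T₀, hT₀, hrepr⟩ := exists_finset_forall_exists_pos_unit σ
    ((finite_setOf_forall_pos_trace_eq hdeg hσ _ _).subset (Set.image_subset_iff.2 hprod)) hprod_ne
  refine ⟨T₀.image fun x => (m * x.1, m * x.2),
    by rw [Finset.coe_image]; exact Set.image_subset_iff.2 hT₀, fun p hp => ?_⟩
  obtain ⟨⟨a, ha⟩, ⟨b, hb⟩, -⟩ := hS ▸ hp
  obtain ⟨u, hu, y, hy, hxy⟩ :=
    hrepr (a, b) (show (m * a, m * b) ∈ S by rw [← ha, ← hb]; exact hp)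
  simp only [Prod.mk.injEq] at hxy
  refine ⟨u, hu, _, Finset.mem_image_of_mem _ hy, Prod.ext ?_ ?_⟩
  · rw [ha, hxy.1]; push_cast; ring
  · rw [hb, hxy.2]; push_cast; ring

/-- The core finiteness assertion of Proposition 4.11 (intersectionD): the set of vectors
`(y, y')` in `m𝒪 × m𝒪` of trace `n` with `σ(y)σ(y') > 0` for all `σ` has finitely many
orbits under the totally positive units acting by `λ·(y, y') = (λy, λ⁻¹y')`. -/
theorem finitely_many_unit_orbits
    (F : Type*) [Field F] [NumberField F] (N : ℕ)
    (hdeg : Module.finrank ℚ F = N)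
    (σ : Fin N → (F →+* ℝ)) (hσ : Function.Bijective σ)
    (m : F) (hm : m ≠ 0) (n : ℚ) (hn : 0 < n)
    (S : Set (F × F))
    (hS : S = {p : F × F | (∃ a : 𝓞 F, p.1 = m * (a : F)) ∧ (∃ a : 𝓞 F, p.2 = m * (a : F)) ∧
      Algebra.trace ℚ F (p.1 * p.2) = n ∧ ∀ j, 0 < σ j p.1 * σ j p.2}) :
    ∃ S₀ : Finset (F × F), ↑S₀ ⊆ S ∧
      ∀ p ∈ S, ∃ u : (𝓞 F)ˣ, (∀ j, 0 < σ j ((u : 𝓞 F) : F)) ∧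
        ∃ q ∈ S₀, p = (((u : 𝓞 F) : F) * q.1, (((u⁻¹ : (𝓞 F)ˣ) : 𝓞 F) : F) * q.2) :=
  finitely_many_unit_orbits_general F N hdeg σ hσ m n S hS
end

section
/- Let A ∈ GL₂(ℚ) satisfy Aᵀ = A, and let S = [[0, −1], [1, 0]]. Define ι : ℚ² × ℚ² → Mat₂(ℚ) by letting ι(x, x') be the 2×2 matrix whose first column is x' and whose second column is S·A·x. Let g₁, g₂ ∈ GL₂(ℚ) with det g₁ = det g₂, write g₂ = [[a, b], [c, d]], and set g₁^# = A⁻¹ · (g₁ᵀ)⁻¹ · A. Then for all x, x' ∈ ℚ²: g₁ · ι(x, x') · g₂⁻¹ = ι( a·g₁^# x + (b/det g₂)·A⁻¹ S g₁ x' , c·S⁻¹ A g₁^# x + (d/det g₂)·g₁ x' ). -/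
set_option maxHeartbeats 1000000 in
/-- Lemma 5.1: the explicit formula for the covering map
`ν : GL₂ ×_{det} GL₂ → SO(F²_ℚ)` in signature `(2,2)`. -/
theorem covering_map_formula
    (A : Matrix (Fin 2) (Fin 2) ℚ) (hA : IsUnit A.det) (hAsymm : A.transpose = A)
    (S : Matrix (Fin 2) (Fin 2) ℚ) (hS : S = !![0, -1; 1, 0])
    (ι : (Fin 2 → ℚ) → (Fin 2 → ℚ) → Matrix (Fin 2) (Fin 2) ℚ)
    (hι : ∀ x x' : Fin 2 → ℚ,
      ι x x' = Matrix.of fun i j => if j = 0 then x' i else (S * A).mulVec x i)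
    (g₁ g₂ : Matrix (Fin 2) (Fin 2) ℚ)
    (hg₁ : IsUnit g₁.det) (hg₂ : IsUnit g₂.det) (hdet : g₁.det = g₂.det)
    (a b c d : ℚ) (hg₂eq : g₂ = !![a, b; c, d])
    (g₁sharp : Matrix (Fin 2) (Fin 2) ℚ)
    (hsharp : g₁sharp = A⁻¹ * (g₁.transpose)⁻¹ * A) :
    ∀ x x' : Fin 2 → ℚ,
      g₁ * ι x x' * g₂⁻¹
        = ι (a • g₁sharp.mulVec x + (b / g₂.det) • (A⁻¹ * S * g₁).mulVec x')
            (c • (S⁻¹ * A * g₁sharp).mulVec x + (d / g₂.det) • g₁.mulVec x') := by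
  intro x x'
  have hD : g₂.det = a * d - b * c := by rw [hg₂eq, Matrix.det_fin_two_of]
  have hdg2 : a * d - b * c ≠ 0 := hD ▸ hg₂.ne_zero
  have hSinv : S⁻¹ = -S := by
    apply Matrix.inv_eq_right_inv
    rw [hS]
    ext i j
    fin_cases i <;> fin_cases j <;>
      simp [Matrix.mul_apply, Fin.sum_univ_two, Matrix.one_apply]
  have hS2 : S * S = -1 := by
    rw [hS]
    ext i j
    fin_cases i <;> fin_cases j <;>
      simp [Matrix.mul_apply, Fin.sum_univ_two, Matrix.one_apply]
  have hadj : (g₁.transpose).adjugate = S⁻¹ * g₁ * S := by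
    rw [hSinv, Matrix.adjugate_fin_two, hS]
    ext i j
    fin_cases i <;> fin_cases j <;>
      simp [Matrix.mul_apply, Fin.sum_univ_two, Matrix.transpose_apply,
        Matrix.vecMul, dotProduct]
  have hg1t_inv : (g₁.transpose)⁻¹ = (a * d - b * c)⁻¹ • (S⁻¹ * g₁ * S) := by
    rw [Matrix.inv_def, Matrix.det_transpose, hdet, hD, Ring.inverse_eq_inv', hadj]
  have hAg : A * g₁sharp = (a * d - b * c)⁻¹ • (S⁻¹ * g₁ * S * A) := by
    rw [hsharp, ← Matrix.mul_assoc, ← Matrix.mul_assoc,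
      Matrix.mul_nonsing_inv _ hA, Matrix.one_mul, hg1t_inv, Matrix.smul_mul]
  have key1 : S * A * g₁sharp = (a * d - b * c)⁻¹ • (g₁ * S * A) := by
    rw [Matrix.mul_assoc, hAg, Matrix.mul_smul]
    congr 1
    simp only [← Matrix.mul_assoc]
    rw [hSinv, Matrix.mul_neg, Matrix.neg_mul, hS2]
    simp [Matrix.mul_assoc]
  have key2 : S⁻¹ * A * g₁sharp = (a * d - b * c)⁻¹ • (-(g₁ * S * A)) := by
    rw [Matrix.mul_assoc, hAg, Matrix.mul_smul]
    congr 1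
    simp only [← Matrix.mul_assoc]
    rw [hSinv, Matrix.neg_mul, Matrix.mul_neg, neg_neg, hS2]
    simp [Matrix.mul_assoc]
  have key3 : (S * A) * (A⁻¹ * S * g₁) = -g₁ := by
    simp only [← Matrix.mul_assoc]
    rw [Matrix.mul_assoc S A A⁻¹, Matrix.mul_nonsing_inv _ hA, Matrix.mul_one,
      hS2, neg_one_mul]
  have hg2inv : g₂⁻¹ = (a * d - b * c)⁻¹ • !![d, -b; -c, a] := by
    rw [Matrix.inv_def, Ring.inverse_eq_inv', hD, hg₂eq, Matrix.adjugate_fin_two_of]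
  rw [hι, hι, hD, key2, hg2inv]
  simp only [Matrix.mulVec_add, Matrix.mulVec_smul, Matrix.mulVec_mulVec, key1, key3,
    Matrix.smul_mulVec, Matrix.neg_mulVec]
  ext i j
  fin_cases i <;> fin_cases j <;>
    · simp only [Matrix.mul_apply, Matrix.mulVec, dotProduct,
        Fin.sum_univ_two, Matrix.smul_apply, Matrix.of_apply, Pi.add_apply,
        Pi.smul_apply, Pi.neg_apply, smul_eq_mul, Matrix.cons_val', hS,
        Matrix.cons_val_zero, Matrix.cons_val_one, Matrix.head_cons,
        Matrix.empty_val', Matrix.cons_val_fin_one, Fin.isValue,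
        Fin.zero_eta, Fin.mk_one, one_ne_zero, Fin.mk_zero, if_true, if_false, reduceIte]
      field_simp
      ring
end

section
/- Equip Mat₂(ℝ) with the symmetric bilinear form B(X, Y) = det(X + Y) − det(X) − det(Y) (the polar form of the quadratic form 2·det). For τ₁ = x₁ + i y₁ and τ₂ = x₂ + i y₂ in the upper half-plane ℍ (y₁, y₂ > 0), set F₁(τ₁, τ₂) = [[y₁, −x₂y₁ − x₁y₂], [0, −y₂]] and F₂(τ₁, τ₂) = [[x₁, −x₁x₂ + y₁y₂], [1, −x₂]]. Then for every 𝐱 ∈ GL₂(ℝ) with det 𝐱 > 0: B(F₁(τ₁, τ₂), 𝐱) = 0 and B(F₂(τ₁, τ₂), 𝐱) = 0 if and only if τ₁ = 𝐱·τ₂, where 𝐱 acts on ℍ by Möbius transformations ([[a,b],[c,d]]·τ = (aτ + b)/(cτ + d)). -/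
/-- Proposition 5.2 (cyclesN2): the plane `X(τ₁, τ₂)` pairs to zero with a positive
vector `𝐱` exactly when `τ₁ = 𝐱·τ₂`. -/
theorem plane_orthogonal_iff_moebius
    (B : Matrix (Fin 2) (Fin 2) ℝ → Matrix (Fin 2) (Fin 2) ℝ → ℝ)
    (hB : ∀ X Y, B X Y = (X + Y).det - X.det - Y.det)
    (τ₁ τ₂ : ℂ) (h₁ : 0 < τ₁.im) (h₂ : 0 < τ₂.im)
    (x₁ y₁ x₂ y₂ : ℝ)
    (he₁ : τ₁ = (x₁ : ℂ) + (y₁ : ℂ) * Complex.I)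
    (he₂ : τ₂ = (x₂ : ℂ) + (y₂ : ℂ) * Complex.I)
    (F₁ F₂ : Matrix (Fin 2) (Fin 2) ℝ)
    (hF₁ : F₁ = !![y₁, -x₂ * y₁ - x₁ * y₂; 0, -y₂])
    (hF₂ : F₂ = !![x₁, -x₁ * x₂ + y₁ * y₂; 1, -x₂])
    (X : Matrix (Fin 2) (Fin 2) ℝ) (hX : 0 < X.det) :
    (B F₁ X = 0 ∧ B F₂ X = 0) ↔
      τ₁ = ((X 0 0 : ℂ) * τ₂ + (X 0 1 : ℂ)) / ((X 1 0 : ℂ) * τ₂ + (X 1 1 : ℂ)) := by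
  obtain ⟨a, b, c, d, rfl⟩ : ∃ a b c d, X = !![a, b; c, d] :=
    ⟨X 0 0, X 0 1, X 1 0, X 1 1, by ext i j; fin_cases i <;> fin_cases j <;> rfl⟩
  have hy₂ : y₂ > 0 := by rw [he₂] at h₂; simpa using h₂
  have hdet : a * d - b * c > 0 := by simpa [Matrix.det_fin_two_of] using hX
  have hden : (c : ℂ) * τ₂ + d ≠ 0 := by
    rcases eq_or_ne c 0 with hc | hc
    · have hd : d ≠ 0 := by rintro rfl; simp [hc] at hdet
      simp [hc, hd]
    · intro h
      have : ((c : ℂ) * τ₂ + d).im = 0 := by rw [h]; simp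
      simp [Complex.add_im, Complex.mul_im, he₂] at this
      rcases this with h | h
      · exact hc h
      · linarith
  have hentry : (((!![a, b; c, d] : Matrix (Fin 2) (Fin 2) ℝ) 0 0 : ℂ) * τ₂ + ((!![a, b; c, d] : Matrix (Fin 2) (Fin 2) ℝ) 0 1 : ℂ)) / (((!![a, b; c, d] : Matrix (Fin 2) (Fin 2) ℝ) 1 0 : ℂ) * τ₂ + ((!![a, b; c, d] : Matrix (Fin 2) (Fin 2) ℝ) 1 1 : ℂ)) = ((a:ℂ) * τ₂ + b) / ((c:ℂ) * τ₂ + d) := by norm_num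
  rw [hentry, eq_div_iff hden, hB, hB, hF₁, hF₂, he₁, he₂]
  simp only [Matrix.det_fin_two, Matrix.of_apply, Matrix.add_apply, Matrix.cons_val', Matrix.cons_val_zero,
    Matrix.cons_val_one, Matrix.head_cons, Matrix.empty_val', Matrix.cons_val_fin_one,
    Matrix.head_fin_const, Complex.ext_iff, Complex.add_re, Complex.mul_re, Complex.mul_im,
    Complex.add_im, Complex.ofReal_re, Complex.ofReal_im, Complex.I_re, Complex.I_im]
  constructor
  · rintro ⟨e1, e2⟩
    ring_nf at e1 e2 ⊢
    constructor <;> linarith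
  · rintro ⟨e1, e2⟩
    ring_nf at e1 e2 ⊢
    constructor <;> linarith
end

section
/- Let p be an odd prime, let d ∈ ℤ_p, let β ∈ ℤ_p be a unit with β² = d, and let r ∈ ℤ_p satisfy r ≡ β (mod p·ℤ_p). Set N₀ = (r² − d)/2 ∈ ℤ_p. Then N₀ ∈ p·ℤ_p, and for all units t, s ∈ ℤ_p^×, the matrix γ(t, s) = [[ (t+s)/2 − r(t−s)/(2β) , (t−s)/β ], [ −N₀(t−s)/(2β) , (t+s)/2 + r(t−s)/(2β) ]] has all entries in ℤ_p, has determinant t·s ∈ ℤ_p^×, and its lower-left entry −N₀(t−s)/(2β) lies in p·ℤ_p. -/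
/-!
Since `p` is odd, `2` and `β` are units of `ℤ_p`, so `2β · γ(t, s)` has entries in `ℤ_p` and
dividing by `2β` keeps them there. As `2 N₀ = (r - β)(r + β)` and `p ∣ r - β`, also `p ∣ N₀`.
The determinant is `((t + s)/2)² - (r² - 2N₀)((t - s)/(2β))² = ((t + s)/2)² - ((t - s)/2)² = t s`.
-/

section EmbeddingMatrix

variable {K : Type*} [Field K]

def embeddingMatrix (β r N t s : K) : Matrix (Fin 2) (Fin 2) K :=
  !![(t + s) / 2 - r * (t - s) / (2 * β), (t - s) / β;
     -N * (t - s) / (2 * β), (t + s) / 2 + r * (t - s) / (2 * β)]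

def embeddingNumerator {R : Type*} [CommRing R] (β r N t s : R) : Matrix (Fin 2) (Fin 2) R :=
  !![(t + s) * β - r * (t - s), 2 * (t - s);
     -N * (t - s), (t + s) * β + r * (t - s)]

theorem embeddingMatrix_map_apply {R : Type*} [CommRing R] (f : R →+* K) {β : R} (r N t s : R)
    (h2 : (2 : K) ≠ 0) (hβ : f β ≠ 0) (i j : Fin 2) :
    embeddingMatrix (f β) (f r) (f N) (f t) (f s) i j
      = f (embeddingNumerator β r N t s i j) / f (2 * β) := by
  fin_cases i <;> fin_cases j <;>
    simp only [embeddingMatrix, embeddingNumerator, Fin.zero_eta, Fin.mk_one, Fin.isValue,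
      Matrix.of_apply, Matrix.cons_val', Matrix.cons_val_zero, Matrix.cons_val_one,
      Matrix.cons_val_fin_one, map_add, map_sub, map_mul, map_neg, map_ofNat] <;>
    field_simp

theorem det_embeddingMatrix {β r N : K} (t s : K) (h2 : (2 : K) ≠ 0) (hβ : β ≠ 0)
    (hN : 2 * N = r ^ 2 - β ^ 2) : (embeddingMatrix β r N t s).det = t * s := by
  rw [embeddingMatrix, Matrix.det_fin_two_of]
  field_simp
  linear_combination (t - s) ^ 2 * hN

end EmbeddingMatrix

theorem dvd_of_two_mul_eq_sq_sub_sq {R : Type*} [CommRing R] {π r β N : R} (h2 : IsUnit (2 : R))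
    (hr : π ∣ r - β) (hN : 2 * N = r ^ 2 - β ^ 2) : π ∣ N := by
  have : π ∣ 2 * N := hN ▸ (sq_sub_sq r β ▸ hr.mul_left _)
  exact h2.dvd_mul_left.1 this

namespace PadicInt

variable {p : ℕ} [Fact p.Prime]

theorem isUnit_two (hp : Odd p) : IsUnit (2 : ℤ_[p]) :=
  isUnit_iff.2 <| by exact_mod_cast norm_natCast_eq_one_iff.2 hp.coprime_two_right

theorem exists_coe_eq_div {b : ℤ_[p]} (hb : IsUnit b) (a : ℤ_[p]) :
    ∃ z : ℤ_[p], (a : ℚ_[p]) / b = z :=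
  ⟨a * ↑hb.unit⁻¹, by
    rw [coe_mul, div_eq_mul_inv]
    exact congrArg _ (map_units_inv Coe.ringHom hb.unit).symm⟩

end PadicInt

/-- The p-adic content of Lemma 5.5 (compactemb): the explicit embedding of
`ℤ_p^× × ℤ_p^×` lands in the compact open subgroup `K₀(p)_p ⊆ GL₂(ℤ_p)`. -/
theorem embedding_lands_in_K0p
    (p : ℕ) [Fact p.Prime] (hodd : Odd p)
    (d : ℤ_[p]) (β : ℤ_[p]) (hβ : IsUnit β) (hβd : β ^ 2 = d)
    (r : ℤ_[p]) (hr : (p : ℤ_[p]) ∣ (r - β))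
    (N₀ : ℤ_[p]) (hN₀ : 2 * N₀ = r ^ 2 - d) :
    (p : ℤ_[p]) ∣ N₀ ∧
    ∀ t s : ℤ_[p], IsUnit t → IsUnit s →
      ∀ γ : Matrix (Fin 2) (Fin 2) ℚ_[p],
        γ = !![((t : ℚ_[p]) + (s : ℚ_[p])) / 2
                 - (r : ℚ_[p]) * ((t : ℚ_[p]) - (s : ℚ_[p])) / (2 * (β : ℚ_[p])),
               ((t : ℚ_[p]) - (s : ℚ_[p])) / (β : ℚ_[p]);
               -(N₀ : ℚ_[p]) * ((t : ℚ_[p]) - (s : ℚ_[p])) / (2 * (β : ℚ_[p])),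
               ((t : ℚ_[p]) + (s : ℚ_[p])) / 2
                 + (r : ℚ_[p]) * ((t : ℚ_[p]) - (s : ℚ_[p])) / (2 * (β : ℚ_[p]))] →
        (∀ i j, ∃ z : ℤ_[p], γ i j = (z : ℚ_[p])) ∧
        (γ.det = (t : ℚ_[p]) * (s : ℚ_[p]) ∧ IsUnit (t * s)) ∧
        (∃ z : ℤ_[p], γ 1 0 = (p : ℚ_[p]) * (z : ℚ_[p])) := by
  subst hβd
  have h2 := PadicInt.isUnit_two hodd
  have hN₀p : (p : ℤ_[p]) ∣ N₀ := dvd_of_two_mul_eq_sq_sub_sq h2 hr hN₀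
  refine ⟨hN₀p, fun t s ht hs γ hγ => ?_⟩
  have hβ0 : (β : ℚ_[p]) ≠ 0 := PadicInt.coe_ne_zero.2 hβ.ne_zero
  have hγ_apply : ∀ i j,
      γ i j = ((embeddingNumerator β r N₀ t s i j : ℤ_[p]) : ℚ_[p]) / ((2 * β : ℤ_[p]) : ℚ_[p]) := by
    subst hγ
    exact embeddingMatrix_map_apply PadicInt.Coe.ringHom r N₀ t s two_ne_zero hβ0
  refine ⟨fun i j => hγ_apply i j ▸ PadicInt.exists_coe_eq_div (h2.mul hβ) _, ⟨?_, ht.mul hs⟩, ?_⟩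
  · have hN₀' : 2 * (N₀ : ℚ_[p]) = r ^ 2 - β ^ 2 := by
      exact_mod_cast congrArg PadicInt.Coe.ringHom hN₀
    exact hγ ▸ det_embeddingMatrix _ _ two_ne_zero hβ0 hN₀'
  · obtain ⟨n, rfl⟩ := hN₀p
    obtain ⟨z, hz⟩ := PadicInt.exists_coe_eq_div (h2.mul hβ) (-n * (t - s))
    have hentry : embeddingNumerator β r (p * n) t s 1 0 = p * (-n * (t - s)) := by
      simp only [embeddingNumerator, Matrix.of_apply, Matrix.cons_val_one, Matrix.cons_val_zero]
      ring
    refine ⟨z, ?_⟩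
    rw [hγ_apply, hentry, PadicInt.coe_mul, mul_div_assoc, hz, PadicInt.coe_natCast]
end
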